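/- arXiv:2007.06491 — 2 statements merged into one kernel-verified Lean document; each statement's English description precedes it below -/
import Mathlib

section
/- With Ψ^PAM as above, dΨ^PAM/dσ² = 1 − 1/M − (nonnegative terms), each of which vanishes as σ² → 0; hence sup_{σ² > 0} dΨ^PAM(σ²)/dσ² = 1 − 1/M and the minimum recovery threshold is β^min = (1 − 1/M)^{-1} = M/(M−1). -/
open MeasureTheory ProbabilityTheory Set

/-- Standard Gaussian tail function `Q(x) = P(Z > x)`. -/
noncomputable def gaussQ (x : ℝ) : ℝ := ((gaussianReal 0 1) (Set.Ioi x)).toReal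

/-- The state-evolution MSE `Ψ^PAM` of the clipping denoiser for `M`-PAM,
as a function of the noise variance `v = σ²` (with `σ = √v`). -/
noncomputable def PsiPAM (M : ℕ) (v : ℝ) : ℝ :=
  (2 / (M:ℝ)) * ∑ k ∈ Finset.Icc 1 (M / 2),
    (v + (((M:ℝ) - 1 - (2 * (k:ℝ) - 1))^2 - v) *
            gaussQ (((M:ℝ) - 1 - (2 * (k:ℝ) - 1)) / Real.sqrt v)
       + (((M:ℝ) - 1 + (2 * (k:ℝ) - 1))^2 - v) *
            gaussQ (((M:ℝ) - 1 + (2 * (k:ℝ) - 1)) / Real.sqrt v)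
       - (Real.sqrt v / Real.sqrt (2 * Real.pi)) *
           (((M:ℝ) - 1 - (2 * (k:ℝ) - 1)) *
              Real.exp (-((M:ℝ) - 1 - (2 * (k:ℝ) - 1))^2 / (2 * v))
            + ((M:ℝ) - 1 + (2 * (k:ℝ) - 1)) *
              Real.exp (-((M:ℝ) - 1 + (2 * (k:ℝ) - 1))^2 / (2 * v))))

/-!
Differentiating summand by summand, the terms involving the Gaussian density cancel and
`dΨ/dσ² = (2/M) ∑ₖ (1 - R(ᾱₖ/σ) - R(αₖ/σ))` with `R(x) = Q(x) + x φ(x)`, which is nonnegative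
for `x ≥ 0`. As `σ² → 0⁺`, `R(a/σ) → 0` for every `a > 0`, while the one vanishing abscissa
`ᾱ_{M/2} = 0` contributes `R(0) = Q(0) = 1/2` for every `σ`. So the derivative is at most
`(2/M)(M/2 - 1/2) = 1 - 1/M` and tends to this value as `σ² → 0⁺`.
-/

open Filter Topology

lemma isLUB_image_of_forall_le_of_tendsto {α γ : Type*} [Preorder γ] [TopologicalSpace γ]
    [OrderClosedTopology γ] {f : α → γ} {s : Set α} {l : Filter α} [l.NeBot] {b : γ}
    (hs : s ∈ l) (hle : ∀ x ∈ s, f x ≤ b) (hlim : Tendsto f l (𝓝 b)) : IsLUB (f '' s) b :=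
  ⟨forall_mem_image.2 hle, fun _ hc =>
    le_of_tendsto hlim (eventually_of_mem hs fun _ hx => hc (mem_image_of_mem f hx))⟩

lemma gaussianPDFReal_zero_one (x : ℝ) :
    gaussianPDFReal 0 1 x = (Real.sqrt (2 * Real.pi))⁻¹ * Real.exp (-x ^ 2 / 2) := by
  simp [gaussianPDFReal]

lemma gaussQ_nonneg (x : ℝ) : 0 ≤ gaussQ x := ENNReal.toReal_nonneg

lemma gaussQ_eq_one_sub_cdf (x : ℝ) : gaussQ x = 1 - cdf (gaussianReal 0 1) x := by
  rw [cdf_eq_real, gaussQ, ← compl_Iic, ← measureReal_def, measureReal_compl measurableSet_Iic,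
    probReal_univ]

lemma gaussQ_eq_one_sub_integral (x : ℝ) :
    gaussQ x = 1 - ∫ t in Iic x, gaussianPDFReal 0 1 t := by
  rw [gaussQ_eq_one_sub_cdf, cdf_eq_real, measureReal_def,
    gaussianReal_apply_eq_integral 0 one_ne_zero,
    ENNReal.toReal_ofReal (integral_nonneg (gaussianPDFReal_nonneg 0 1))]

lemma hasDerivAt_gaussQ (x : ℝ) : HasDerivAt gaussQ (-gaussianPDFReal 0 1 x) x := by
  have hint := integrable_gaussianPDFReal 0 1
  have hcont : Continuous (gaussianPDFReal 0 1) := by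
    rw [gaussianPDFReal_def]; fun_prop
  have hQ : gaussQ = fun y => gaussQ 0 - ∫ t in (0:ℝ)..y, gaussianPDFReal 0 1 t := by
    funext y
    rw [gaussQ_eq_one_sub_integral, gaussQ_eq_one_sub_integral,
      ← intervalIntegral.integral_Iic_sub_Iic hint.integrableOn hint.integrableOn]
    ring
  rw [hQ]
  exact (intervalIntegral.integral_hasDerivAt_right hint.intervalIntegrable
    hcont.stronglyMeasurable.stronglyMeasurableAtFilter hcont.continuousAt).const_sub _

lemma gaussQ_zero : gaussQ 0 = 1 / 2 := by
  set μ := gaussianReal 0 1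
  have hsymm : μ (Ioi 0) = μ (Iio 0) := by
    have hneg : μ.map (fun x => -x) = μ := by
      simpa only [neg_zero] using gaussianReal_map_neg (μ := 0) (v := 1)
    conv_lhs => rw [← hneg, Measure.map_apply measurable_neg measurableSet_Ioi]
    congr 1; ext; simp
  have hatom : μ (Ioi 0) = μ (Ici 0) := by
    have := nullSingletonClass_gaussianReal (μ := 0) (v := 1) one_ne_zero
    exact measure_congr Ioi_ae_eq_Ici
  have htotal := measureReal_add_measureReal_compl (μ := μ) (measurableSet_Ici (a := (0:ℝ)))
  rw [compl_Ici, probReal_univ, measureReal_def, measureReal_def, ← hatom, ← hsymm] at htotal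
  rw [gaussQ]
  linarith

lemma tendsto_gaussQ_atTop : Tendsto gaussQ atTop (𝓝 0) := by
  simpa [funext gaussQ_eq_one_sub_cdf] using
    (tendsto_const_nhds (x := (1:ℝ))).sub (tendsto_cdf_atTop (gaussianReal 0 1))

lemma tendsto_mul_gaussianPDFReal_atTop :
    Tendsto (fun x => x * gaussianPDFReal 0 1 x) atTop (𝓝 0) := by
  have h := ((tendsto_rpow_abs_mul_exp_neg_mul_sq_cocompact one_half_pos 1).mono_left
    atTop_le_cocompact).const_mul (Real.sqrt (2 * Real.pi))⁻¹
  rw [mul_zero] at h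
  refine h.congr' ?_
  filter_upwards [eventually_ge_atTop 0] with x hx
  rw [gaussianPDFReal_zero_one, Real.rpow_one, abs_of_nonneg hx]
  ring_nf

noncomputable def gaussR (x : ℝ) : ℝ := gaussQ x + x * gaussianPDFReal 0 1 x

noncomputable def clipTerm (a v : ℝ) : ℝ :=
  (a ^ 2 - v) * gaussQ (a / Real.sqrt v)
    - Real.sqrt v / Real.sqrt (2 * Real.pi) * (a * Real.exp (-a ^ 2 / (2 * v)))

lemma hasDerivAt_clipTerm (a : ℝ) {v : ℝ} (hv : 0 < v) :
    HasDerivAt (clipTerm a) (-gaussR (a / Real.sqrt v)) v := by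
  have hsqrt := Real.hasDerivAt_sqrt hv.ne'
  have hsne : Real.sqrt v ≠ 0 := (Real.sqrt_pos.2 hv).ne'
  have hQ := ((hasDerivAt_gaussQ (a / Real.sqrt v)).comp v ((hasDerivAt_const v a).div hsqrt hsne))
  have hexp := ((hasDerivAt_const v (-a ^ 2)).div ((hasDerivAt_id' v).const_mul 2)
    (by positivity)).exp
  have h := (((hasDerivAt_id' v).const_sub (a ^ 2)).mul hQ).sub
    ((hsqrt.div_const (Real.sqrt (2 * Real.pi))).mul (hexp.const_mul a))
  refine h.congr_deriv ?_
  obtain ⟨s, hs0, rfl⟩ : ∃ s, 0 < s ∧ v = s ^ 2 :=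
    ⟨Real.sqrt v, Real.sqrt_pos.2 hv, (Real.sq_sqrt hv.le).symm⟩
  simp only [gaussR, Function.comp_apply, Pi.div_apply, gaussianPDFReal_zero_one,
    Real.sqrt_sq hs0.le, div_pow]
  field_simp
  ring

lemma gaussR_zero : gaussR 0 = 1 / 2 := by
  simp [gaussR, gaussQ_zero]

lemma gaussR_nonneg {x : ℝ} (hx : 0 ≤ x) : 0 ≤ gaussR x :=
  add_nonneg (gaussQ_nonneg x) (mul_nonneg hx (gaussianPDFReal_nonneg 0 1 x))

lemma tendsto_gaussR_atTop : Tendsto gaussR atTop (𝓝 0) := by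
  have h := tendsto_gaussQ_atTop.add tendsto_mul_gaussianPDFReal_atTop
  rwa [add_zero] at h

lemma tendsto_div_sqrt_nhdsGT_zero {a : ℝ} (ha : 0 < a) :
    Tendsto (fun v => a / Real.sqrt v) (𝓝[>] 0) atTop := by
  have hsqrt : Tendsto Real.sqrt (𝓝[>] 0) (𝓝[>] 0) :=
    tendsto_nhdsWithin_of_tendsto_nhds_of_eventually_within _
      (by simpa using Real.continuous_sqrt.tendsto 0 |>.mono_left nhdsWithin_le_nhds)
      (eventually_nhdsWithin_of_forall fun v hv => Real.sqrt_pos.2 hv)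
  simpa only [div_eq_mul_inv, Function.comp_def] using
    (tendsto_inv_nhdsGT_zero.comp hsqrt).const_mul_atTop ha

noncomputable def gaussRLimit (a : ℝ) : ℝ := if a = 0 then 1 / 2 else 0

lemma gaussRLimit_le_gaussR {a : ℝ} (ha : 0 ≤ a) (v : ℝ) :
    gaussRLimit a ≤ gaussR (a / Real.sqrt v) := by
  rcases ha.eq_or_lt with rfl | ha
  · simp [gaussRLimit, gaussR_zero]
  · simpa [gaussRLimit, ha.ne'] using gaussR_nonneg (div_nonneg ha.le (Real.sqrt_nonneg v))

lemma tendsto_gaussR_div_sqrt {a : ℝ} (ha : 0 ≤ a) :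
    Tendsto (fun v => gaussR (a / Real.sqrt v)) (𝓝[>] 0) (𝓝 (gaussRLimit a)) := by
  rcases ha.eq_or_lt with rfl | ha
  · simp [gaussRLimit, gaussR_zero]
  · simpa [gaussRLimit, ha.ne', Function.comp_def] using
      tendsto_gaussR_atTop.comp (tendsto_div_sqrt_nhdsGT_zero ha)

-- `pamLow M k` and `pamHigh M k` are the paper's `ᾱ_k` and `α_k`.
noncomputable def pamLow (M k : ℕ) : ℝ := (M : ℝ) - 1 - (2 * (k : ℝ) - 1)

noncomputable def pamHigh (M k : ℕ) : ℝ := (M : ℝ) - 1 + (2 * (k : ℝ) - 1)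

lemma pamLow_nonneg {M k : ℕ} (hk : k ≤ M / 2) : 0 ≤ pamLow M k := by
  have : ((2 * k : ℕ) : ℝ) ≤ M := by exact_mod_cast (by omega : 2 * k ≤ M)
  push_cast at this
  unfold pamLow
  linarith

lemma pamLow_eq_zero_iff {M k : ℕ} (hMe : Even M) : pamLow M k = 0 ↔ k = M / 2 := by
  have : pamLow M k = 0 ↔ ((2 * k : ℕ) : ℝ) = M := by
    unfold pamLow; push_cast; constructor <;> intro h <;> linarith
  rw [this, Nat.cast_inj]
  obtain ⟨r, rfl⟩ := hMe
  omega

lemma pamHigh_pos {M k : ℕ} (hM : 1 ≤ M) (hk : 1 ≤ k) : 0 < pamHigh M k := by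
  have hM' : (1 : ℝ) ≤ M := by exact_mod_cast hM
  have hk' : (1 : ℝ) ≤ k := by exact_mod_cast hk
  unfold pamHigh
  linarith

lemma PsiPAM_eq_sum_clipTerm (M : ℕ) :
    PsiPAM M = fun v => (2 / (M : ℝ)) * ∑ k ∈ Finset.Icc 1 (M / 2),
      (v + clipTerm (pamLow M k) v + clipTerm (pamHigh M k) v) := by
  funext v
  simp only [PsiPAM, clipTerm, pamLow, pamHigh]
  congr 1
  exact Finset.sum_congr rfl fun k _ => by ring

noncomputable def derivPsiPAM (M : ℕ) (v : ℝ) : ℝ :=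
  (2 / (M : ℝ)) * ∑ k ∈ Finset.Icc 1 (M / 2),
    (1 - gaussR (pamLow M k / Real.sqrt v) - gaussR (pamHigh M k / Real.sqrt v))

lemma hasDerivAt_PsiPAM (M : ℕ) {v : ℝ} (hv : 0 < v) :
    HasDerivAt (PsiPAM M) (derivPsiPAM M v) v := by
  rw [PsiPAM_eq_sum_clipTerm]
  refine (HasDerivAt.fun_sum fun k _ => ?_).const_mul _
  simpa [sub_eq_add_neg] using
    ((hasDerivAt_id' v).fun_add (hasDerivAt_clipTerm _ hv)).fun_add (hasDerivAt_clipTerm _ hv)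

lemma sum_gaussRLimit_pam {M : ℕ} (hM : 2 ≤ M) (hMe : Even M) :
    (2 / (M : ℝ)) * ∑ k ∈ Finset.Icc 1 (M / 2),
      (1 - gaussRLimit (pamLow M k) - gaussRLimit (pamHigh M k)) = 1 - 1 / M := by
  have hlow : ∑ k ∈ Finset.Icc 1 (M / 2), gaussRLimit (pamLow M k) = 1 / 2 := by
    simp only [gaussRLimit, pamLow_eq_zero_iff hMe]
    rw [Finset.sum_ite_eq', if_pos (Finset.mem_Icc.2 ⟨by omega, le_rfl⟩)]
  have hhigh : ∑ k ∈ Finset.Icc 1 (M / 2), gaussRLimit (pamHigh M k) = 0 :=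
    Finset.sum_eq_zero fun k hk =>
      if_neg (pamHigh_pos (by omega) (Finset.mem_Icc.1 hk).1).ne'
  have hcard : ((M / 2 : ℕ) : ℝ) = M / 2 := Nat.cast_div_charZero (even_iff_two_dvd.1 hMe)
  have hM0 : (M : ℝ) ≠ 0 := by positivity
  rw [Finset.sum_sub_distrib, Finset.sum_sub_distrib, hlow, hhigh, Finset.sum_const,
    Nat.card_Icc, nsmul_one, Nat.add_sub_cancel, hcard]
  field_simp
  ring

lemma derivPsiPAM_le {M : ℕ} (hM : 2 ≤ M) (hMe : Even M) {v : ℝ} :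
    derivPsiPAM M v ≤ 1 - 1 / M := by
  rw [← sum_gaussRLimit_pam hM hMe, derivPsiPAM]
  gcongr with k hk
  all_goals obtain ⟨hk1, hk2⟩ := Finset.mem_Icc.1 hk
  · exact gaussRLimit_le_gaussR (pamLow_nonneg hk2) v
  · exact gaussRLimit_le_gaussR (pamHigh_pos (by omega) hk1).le v

lemma tendsto_derivPsiPAM {M : ℕ} (hM : 2 ≤ M) (hMe : Even M) :
    Tendsto (derivPsiPAM M) (𝓝[>] 0) (𝓝 (1 - 1 / M)) := by
  rw [← sum_gaussRLimit_pam hM hMe]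
  refine (tendsto_finsetSum _ fun k hk => ?_).const_mul _
  obtain ⟨hk1, hk2⟩ := Finset.mem_Icc.1 hk
  exact (tendsto_const_nhds.sub (tendsto_gaussR_div_sqrt (pamLow_nonneg hk2))).sub
    (tendsto_gaussR_div_sqrt (pamHigh_pos (by omega) hk1).le)

/-- The derivative of `Ψ^PAM` in `σ²` is bounded by `1 − 1/M`, with supremum
`1 − 1/M` attained in the limit `σ² → 0`; hence the minimum recovery threshold
is `β^min = (1 − 1/M)⁻¹ = M/(M−1)`. -/
theorem psi_pam_deriv_sup (M : ℕ) (hM : 2 ≤ M) (hMe : Even M) :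
    IsLUB (deriv (PsiPAM M) '' Ioi 0) (1 - 1 / (M:ℝ)) ∧
    ((1:ℝ) - 1 / (M:ℝ))⁻¹ = (M:ℝ) / ((M:ℝ) - 1) := by
  have hderiv : EqOn (deriv (PsiPAM M)) (derivPsiPAM M) (Ioi 0) :=
    fun v hv => (hasDerivAt_PsiPAM M hv).deriv
  refine ⟨?_, ?_⟩
  · rw [image_congr hderiv]
    exact isLUB_image_of_forall_le_of_tendsto self_mem_nhdsWithin
      (fun v _ => derivPsiPAM_le hM hMe) (tendsto_derivPsiPAM hM hMe)
  · have hM1 : (M : ℝ) - 1 ≠ 0 := by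
      have : (2 : ℝ) ≤ M := by exact_mod_cast hM
      linarith
    have hM0 : (M : ℝ) ≠ 0 := by positivity
    field_simp
end

section
/- Let ν₋(r,τ) = (e^{−(r+α)²/(2τ)} − e^{−(r−α)²/(2τ)})/(√(2πτ)(Φ((r+α)/√τ) − Φ((r−α)/√τ))) and F(r,τ) = r + τ·ν₋(r,τ) be the posterior mean of a uniform prior on [−α,α] observed through Gaussian noise of variance τ. Then for each fixed r ∈ ℝ, lim_{τ→0⁺} F(r,τ) = r + sign(r)·min{α − |r|, 0}; i.e., the posterior mean converges pointwise to the clipping function F^α(r) = max{−α, min{α, r}}. -/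
/-!
Given the observation `r`, the noise `r - X` is `N(0, τ)` conditioned on `[r - α, r + α]`, so
`F(r, τ) = r - truncGaussianMean (r - α) (r + α) τ`. As `τ → 0⁺`, the Gaussian truncated to
`[a, b]` concentrates at the point of `[a, b]` nearest to `0`: its mean tends to
`max a (min b 0)`, and `r - max (r - α) (min (r + α) 0)` is the clipping of `r` to `[-α, α]`.
If `0 ∈ [a, b]`, the numerator of the mean is at most `τ` while the denominator is at least
`√τ e^{-1/2}`. If `0 < a`, the tangent bound `e^{-s²/2τ} ≤ e^{-a²/2τ} e^{-a(s-a)/τ}` shows that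
the mean is `a + O(τ)`. The case `b ≤ 0` follows by reflection.
-/

open MeasureTheory ProbabilityTheory Filter

/-- Standard Gaussian CDF `Φ`. -/
noncomputable def gaussPhi (x : ℝ) : ℝ := ((gaussianReal 0 1) (Set.Iic x)).toReal

open Real Set Topology

noncomputable def truncGaussianMean (a b τ : ℝ) : ℝ :=
  (∫ s in a..b, s * exp (-s ^ 2 / (2 * τ))) / ∫ s in a..b, exp (-s ^ 2 / (2 * τ))

lemma integral_mul_exp_neg_sq_div {τ : ℝ} (hτ : τ ≠ 0) (a b : ℝ) :
    ∫ s in a..b, s * exp (-s ^ 2 / (2 * τ)) =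
      τ * (exp (-a ^ 2 / (2 * τ)) - exp (-b ^ 2 / (2 * τ))) := by
  have hderiv (s : ℝ) : HasDerivAt (fun u => -τ * exp (-u ^ 2 / (2 * τ)))
      (s * exp (-s ^ 2 / (2 * τ))) s := by
    refine (((hasDerivAt_pow 2 s).fun_neg.div_const (2 * τ)).exp.const_mul (-τ)).congr_deriv ?_
    field_simp
    ring
  rw [intervalIntegral.integral_eq_sub_of_hasDerivAt (fun s _ => hderiv s)
    (Continuous.intervalIntegrable (by fun_prop) _ _)]
  ring

lemma abs_integral_mul_exp_neg_sq_div_le {τ : ℝ} (hτ : 0 < τ) (a b : ℝ) :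
    |∫ s in a..b, s * exp (-s ^ 2 / (2 * τ))| ≤ τ := by
  have hexp_le_one (x : ℝ) : exp (-x ^ 2 / (2 * τ)) ≤ 1 :=
    exp_le_one_iff.2 (div_nonpos_of_nonpos_of_nonneg (by nlinarith) (by positivity))
  rw [integral_mul_exp_neg_sq_div hτ.ne', abs_mul, abs_of_pos hτ]
  exact mul_le_of_le_one_right hτ.le (abs_sub_le_of_nonneg_of_le (exp_pos _).le
    (hexp_le_one a) (exp_pos _).le (hexp_le_one b))

lemma gaussPhi_sub_gaussPhi (x y : ℝ) :
    gaussPhi y - gaussPhi x = ∫ t in x..y, (√(2 * π))⁻¹ * exp (-t ^ 2 / 2) := by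
  have hΦ (z : ℝ) : gaussPhi z = ∫ t in Iic z, gaussianPDFReal 0 1 t := by
    rw [gaussPhi, gaussianReal_apply_eq_integral 0 one_ne_zero, ENNReal.toReal_ofReal]
    exact setIntegral_nonneg measurableSet_Iic fun t _ => gaussianPDFReal_nonneg 0 1 t
  rw [hΦ, hΦ, intervalIntegral.integral_Iic_sub_Iic (integrable_gaussianPDFReal 0 1).integrableOn
    (integrable_gaussianPDFReal 0 1).integrableOn]
  simp [gaussianPDFReal]

lemma sqrt_mul_gaussPhi_sub_gaussPhi {τ : ℝ} (hτ : 0 < τ) (a b : ℝ) :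
    √(2 * π * τ) * (gaussPhi (b / √τ) - gaussPhi (a / √τ)) =
      ∫ s in a..b, exp (-s ^ 2 / (2 * τ)) := by
  have hsqrt : √τ ≠ 0 := (sqrt_pos.2 hτ).ne'
  have hrescale : (∫ s in a..b, exp (-s ^ 2 / (2 * τ))) =
      ∫ s in a..b, (fun t => exp (-t ^ 2 / 2)) (s / √τ) := by
    refine intervalIntegral.integral_congr fun s _ => ?_
    simp only [div_pow, sq_sqrt hτ.le]
    ring_nf
  rw [gaussPhi_sub_gaussPhi, hrescale,
    intervalIntegral.integral_comp_div (fun t => exp (-t ^ 2 / 2)) hsqrt,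
    intervalIntegral.integral_const_mul, smul_eq_mul, sqrt_mul (by positivity)]
  have : √(2 * π) ≠ 0 := by positivity
  field_simp

lemma mul_exp_neg_sq_le_integral {τ a b c d : ℝ} (hτ : 0 ≤ τ) (hc : 0 ≤ c) (hac : a ≤ c)
    (hcd : c ≤ d) (hdb : d ≤ b) :
    (d - c) * exp (-d ^ 2 / (2 * τ)) ≤ ∫ s in a..b, exp (-s ^ 2 / (2 * τ)) :=
  calc (d - c) * exp (-d ^ 2 / (2 * τ)) = ∫ _ in c..d, exp (-d ^ 2 / (2 * τ)) := by
        rw [intervalIntegral.integral_const, smul_eq_mul]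
    _ ≤ ∫ s in c..d, exp (-s ^ 2 / (2 * τ)) :=
        intervalIntegral.integral_mono_on hcd intervalIntegrable_const
          (Continuous.intervalIntegrable (by fun_prop) _ _) fun s hs =>
          exp_le_exp.2 (div_le_div_of_nonneg_right
            (neg_le_neg (pow_le_pow_left₀ (hc.trans hs.1) hs.2 2)) (by positivity))
    _ ≤ ∫ s in a..b, exp (-s ^ 2 / (2 * τ)) :=
        intervalIntegral.integral_mono_interval hac hcd hdb
          (Eventually.of_forall fun s => (exp_pos _).le)
          (Continuous.intervalIntegrable (by fun_prop) _ _)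

lemma integral_sub_mul_exp_neg_mul_sub_le {k a b : ℝ} (hk : 0 < k) (hab : a ≤ b) :
    ∫ s in a..b, (s - a) * exp (-(k * (s - a))) ≤ 1 / k ^ 2 := by
  have hderiv (s : ℝ) : HasDerivAt (fun u => -(exp (-(k * (u - a))) * ((u - a) / k + 1 / k ^ 2)))
      ((s - a) * exp (-(k * (s - a)))) s := by
    have hlin : HasDerivAt (fun u => -(k * (u - a))) (-k) s :=
      (((hasDerivAt_id' s).sub_const a).const_mul k).neg.congr_deriv (by ring)
    refine (hlin.exp.mul (((hasDerivAt_id' s).sub_const a).div_const k |>.add_const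
      (1 / k ^ 2))).neg.congr_deriv ?_
    field_simp
    ring
  rw [intervalIntegral.integral_eq_sub_of_hasDerivAt (fun s _ => hderiv s)
    (Continuous.intervalIntegrable (by fun_prop) _ _)]
  have : 0 ≤ exp (-(k * (b - a))) * ((b - a) / k + 1 / k ^ 2) :=
    mul_nonneg (exp_pos _).le (add_nonneg (div_nonneg (by linarith) hk.le) (by positivity))
  simp only [sub_self, mul_zero, neg_zero, exp_zero, zero_div, zero_add, one_mul]
  linarith

lemma integral_sub_mul_exp_neg_sq_le {τ a b : ℝ} (hτ : 0 < τ) (ha : 0 < a) (hab : a ≤ b) :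
    ∫ s in a..b, (s - a) * exp (-s ^ 2 / (2 * τ)) ≤ exp (-a ^ 2 / (2 * τ)) * (τ / a) ^ 2 := by
  have htangent (s : ℝ) :
      exp (-s ^ 2 / (2 * τ)) ≤ exp (-a ^ 2 / (2 * τ)) * exp (-(a / τ * (s - a))) := by
    rw [← exp_add, exp_le_exp, ← sub_nonneg]
    have : -a ^ 2 / (2 * τ) + -(a / τ * (s - a)) - -s ^ 2 / (2 * τ) = (s - a) ^ 2 / (2 * τ) := by
      field_simp
      ring
    rw [this]
    positivity
  calc ∫ s in a..b, (s - a) * exp (-s ^ 2 / (2 * τ))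
      ≤ ∫ s in a..b, exp (-a ^ 2 / (2 * τ)) * ((s - a) * exp (-(a / τ * (s - a)))) :=
        intervalIntegral.integral_mono_on hab (Continuous.intervalIntegrable (by fun_prop) _ _)
          (Continuous.intervalIntegrable (by fun_prop) _ _) fun s hs => by
          rw [mul_left_comm]
          exact mul_le_mul_of_nonneg_left (htangent s) (sub_nonneg.2 hs.1)
    _ ≤ exp (-a ^ 2 / (2 * τ)) * (τ / a) ^ 2 := by
        rw [intervalIntegral.integral_const_mul]
        refine mul_le_mul_of_nonneg_left ?_ (exp_pos _).le
        simpa [div_pow] using integral_sub_mul_exp_neg_mul_sub_le (div_pos ha hτ) hab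

lemma truncGaussianMean_neg (a b τ : ℝ) :
    truncGaussianMean (-b) (-a) τ = -truncGaussianMean a b τ := by
  simp only [truncGaussianMean, ← intervalIntegral.integral_comp_neg, neg_sq, neg_mul,
    intervalIntegral.integral_neg, neg_div]

lemma tendsto_truncGaussianMean_zero {a b : ℝ} (ha : a ≤ 0) (hb : 0 < b) :
    Tendsto (truncGaussianMean a b) (𝓝[>] 0) (𝓝 0) := by
  have hbound : ∀ᶠ τ in 𝓝[>] 0, ‖truncGaussianMean a b τ‖ ≤ exp (1 / 2) * √τ := by
    filter_upwards [Ioc_mem_nhdsGT (by positivity : (0 : ℝ) < b ^ 2)] with τ ⟨hτ, hτb⟩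
    have hsqrt : √τ ≤ b := (sqrt_le_sqrt hτb).trans_eq (sqrt_sq hb.le)
    have hD : √τ * exp (-(1 / 2)) ≤ ∫ s in a..b, exp (-s ^ 2 / (2 * τ)) := by
      have := mul_exp_neg_sq_le_integral hτ.le le_rfl ha (sqrt_nonneg τ) hsqrt
      rwa [sq_sqrt hτ.le, sub_zero, show -τ / (2 * τ) = -(1 / 2) by field_simp] at this
    calc ‖truncGaussianMean a b τ‖ ≤ τ / (√τ * exp (-(1 / 2))) := by
          rw [truncGaussianMean, norm_div, Real.norm_eq_abs, Real.norm_eq_abs,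
            abs_of_pos ((by positivity : (0 : ℝ) < √τ * exp (-(1 / 2))).trans_le hD)]
          exact div_le_div₀ hτ.le (abs_integral_mul_exp_neg_sq_div_le hτ a b) (by positivity) hD
      _ = exp (1 / 2) * √τ := by
          rw [exp_neg, div_mul_eq_div_div, div_inv_eq_mul, div_sqrt]
          ring
  refine squeeze_zero_norm' hbound (Tendsto.mono_left ?_ nhdsWithin_le_nhds)
  simpa using (continuous_sqrt.tendsto 0).const_mul (exp (1 / 2))

lemma tendsto_truncGaussianMean_left {a b : ℝ} (ha : 0 < a) (hab : a < b) :
    Tendsto (truncGaussianMean a b) (𝓝[>] 0) (𝓝 a) := by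
  have hbound : ∀ᶠ τ in 𝓝[>] 0,
      ‖truncGaussianMean a b τ - a‖ ≤ exp (a + 1 / 2) / a ^ 2 * τ := by
    filter_upwards [Ioc_mem_nhdsGT (lt_min one_pos (sub_pos.2 hab))] with τ ⟨hτ, hτ_le⟩
    have hτ_one : τ ≤ 1 := hτ_le.trans (min_le_left _ _)
    have hτ_ba : a + τ ≤ b := by linarith [hτ_le.trans (min_le_right _ _)]
    set E := exp (-a ^ 2 / (2 * τ))
    have hE : E ≠ 0 := (exp_pos _).ne'
    have hD : τ * (E * exp (-(a + 1 / 2))) ≤ ∫ s in a..b, exp (-s ^ 2 / (2 * τ)) := by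
      refine le_trans ?_ (mul_exp_neg_sq_le_integral hτ.le ha.le le_rfl
        (le_add_of_nonneg_right hτ.le) hτ_ba)
      rw [add_sub_cancel_left, ← exp_add]
      refine mul_le_mul_of_nonneg_left (exp_le_exp.2 ?_) hτ.le
      have : -(a + τ) ^ 2 / (2 * τ) = -a ^ 2 / (2 * τ) - a - τ / 2 := by
        field_simp
        ring
      linarith
    have hDpos : 0 < ∫ s in a..b, exp (-s ^ 2 / (2 * τ)) := lt_of_lt_of_le (by positivity) hD
    have hsub : truncGaussianMean a b τ - a =
        (∫ s in a..b, (s - a) * exp (-s ^ 2 / (2 * τ))) / ∫ s in a..b, exp (-s ^ 2 / (2 * τ)) := by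
      rw [truncGaussianMean, div_sub' hDpos.ne', ← intervalIntegral.integral_mul_const,
        ← intervalIntegral.integral_sub (Continuous.intervalIntegrable (by fun_prop) _ _)
          (Continuous.intervalIntegrable (by fun_prop) _ _)]
      simp only [sub_mul, mul_comm]
    have hP : 0 ≤ ∫ s in a..b, (s - a) * exp (-s ^ 2 / (2 * τ)) :=
      intervalIntegral.integral_nonneg hab.le fun s hs =>
        mul_nonneg (sub_nonneg.2 hs.1) (exp_pos _).le
    rw [hsub, Real.norm_eq_abs, abs_of_nonneg (div_nonneg hP hDpos.le)]
    calc _ ≤ E * (τ / a) ^ 2 / (τ * (E * exp (-(a + 1 / 2)))) :=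
          div_le_div₀ (by positivity) (integral_sub_mul_exp_neg_sq_le hτ ha hab.le)
            (by positivity) hD
      _ = exp (a + 1 / 2) / a ^ 2 * τ := by
          rw [exp_neg]
          field_simp
  have hlim : Tendsto (fun τ => exp (a + 1 / 2) / a ^ 2 * τ) (𝓝[>] 0) (𝓝 0) := by
    refine Tendsto.mono_left ?_ nhdsWithin_le_nhds
    simpa using (tendsto_id (x := 𝓝 (0 : ℝ))).const_mul (exp (a + 1 / 2) / a ^ 2)
  simpa using (squeeze_zero_norm' hbound hlim).add_const a

lemma tendsto_truncGaussianMean_of_pos {a b : ℝ} (hab : a < b) (hb : 0 < b) :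
    Tendsto (truncGaussianMean a b) (𝓝[>] 0) (𝓝 (max a 0)) := by
  rcases lt_or_ge 0 a with ha | ha
  · simpa [max_eq_left ha.le] using tendsto_truncGaussianMean_left ha hab
  · simpa [max_eq_right ha] using tendsto_truncGaussianMean_zero ha hb

lemma tendsto_truncGaussianMean {a b : ℝ} (hab : a < b) :
    Tendsto (truncGaussianMean a b) (𝓝[>] 0) (𝓝 (max a (min b 0))) := by
  rcases lt_or_ge 0 b with hb | hb
  · simpa [min_eq_right hb.le] using tendsto_truncGaussianMean_of_pos hab hb
  · have hreflect := (tendsto_truncGaussianMean_of_pos (neg_lt_neg hab) (by linarith)).neg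
    simp only [truncGaussianMean_neg, neg_neg, max_eq_left (neg_nonneg.2 hb)] at hreflect
    simpa [min_eq_left hb, max_eq_right hab.le] using hreflect

lemma sub_max_sub_min_add_eq_max_min {α : ℝ} (hα : 0 ≤ α) (r : ℝ) :
    r - max (r - α) (min (r + α) 0) = max (-α) (min α r) := by
  rw [min_def, max_def, min_def, max_def]
  split_ifs <;> linarith

lemma add_sign_mul_min_eq_max_min {α : ℝ} (hα : 0 ≤ α) (r : ℝ) :
    r + sign r * min (α - |r|) 0 = max (-α) (min α r) := by
  rcases lt_trichotomy r 0 with hr | rfl | hr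
  · rw [sign_of_neg hr, abs_of_neg hr, min_def, max_def, min_def]
    split_ifs <;> linarith
  · simp [hα]
  · rw [sign_of_pos hr, abs_of_pos hr, min_def, max_def, min_def]
    split_ifs <;> linarith

/-- As `τ → 0⁺`, the posterior mean `F(r,τ) = r + τ ν₋(r,τ)` of the uniform
prior on `[-α,α]` converges pointwise to the clipping function
`F^α(r) = r + sign(r) min{α − |r|, 0} = max{−α, min{α, r}}`. -/
theorem uniform_posterior_mean_clip_limit (α r : ℝ) (hα : 0 < α) :
    Tendsto
      (fun τ : ℝ => r + τ *
        ((Real.exp (-(r + α)^2 / (2 * τ)) - Real.exp (-(r - α)^2 / (2 * τ))) /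
          (Real.sqrt (2 * Real.pi * τ) *
            (gaussPhi ((r + α) / Real.sqrt τ) - gaussPhi ((r - α) / Real.sqrt τ)))))
      (nhdsWithin 0 (Set.Ioi 0))
      (nhds (r + Real.sign r * min (α - |r|) 0)) ∧
    r + Real.sign r * min (α - |r|) 0 = max (-α) (min α r) := by
  have hclip := add_sign_mul_min_eq_max_min hα.le r
  refine ⟨?_, hclip⟩
  rw [hclip, ← sub_max_sub_min_add_eq_max_min hα.le]
  refine ((tendsto_truncGaussianMean (by linarith : r - α < r + α)).const_sub r).congr' ?_
  filter_upwards [self_mem_nhdsWithin] with τ (hτ : 0 < τ)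
  rw [truncGaussianMean, integral_mul_exp_neg_sq_div hτ.ne', sqrt_mul_gaussPhi_sub_gaussPhi hτ]
  ring
end
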